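/- arXiv:1703.04806 — 2 statements merged into one kernel-verified Lean document; each statement's English description precedes it below -/
import Mathlib

section
/- Let T = (S,Σ,κ) be an STS and B ∈ Σ with avoid-set B̃. Then for every probability measure μ on S, Prob_μ(F B̃) = Prob_μ(FG B̃) = Prob_μ(GF B̃). -/
open MeasureTheory ProbabilityTheory ENNReal Filter Topology

namespace STS

variable {S : Type*} [MeasurableSpace S]

/-- Probability of the cylinder `Cyl(A 0, …, A n)` for the Markov chain with kernel `κ`
and initial distribution `μ`. -/
noncomputable def cylProb (κ : Kernel S S) : ℕ → Measure S → (ℕ → Set S) → ℝ≥0∞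
  | 0, μ, A => μ (A 0)
  | n + 1, μ, A => ∫⁻ s in A 0, cylProb κ n (κ s) (fun i => A (i + 1)) ∂μ

/-- `P` assigns to each initial (probability) distribution the path measure (on `ℕ → S`,
with the product σ-algebra) of the time-homogeneous Markov chain with transition kernel `κ`,
as given by the Ionescu–Tulcea construction: it is the unique probability measure giving
cylinders their prescribed probabilities. -/
def IsPathMeasure (κ : Kernel S S) (P : Measure S → Measure (ℕ → S)) : Prop :=
  ∀ μ : Measure S, IsProbabilityMeasure μ →
    IsProbabilityMeasure (P μ) ∧
    ∀ (n : ℕ) (A : ℕ → Set S), (∀ i, MeasurableSet (A i)) →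
      P μ {ρ | ∀ i ≤ n, ρ i ∈ A i} = cylProb κ n μ A

/-- The path event `F B`: eventually reach `B`. -/
def evF (B : Set S) : Set (ℕ → S) := {ρ | ∃ k, ρ k ∈ B}

/-- The path event `F≤n B`. -/
def evFle (n : ℕ) (B : Set S) : Set (ℕ → S) := {ρ | ∃ k ≤ n, ρ k ∈ B}

/-- The path event `F≥p B`. -/
def evFge (p : ℕ) (B : Set S) : Set (ℕ → S) := {ρ | ∃ k, p ≤ k ∧ ρ k ∈ B}

/-- The path event `GF B`: visit `B` infinitely often. -/
def evGF (B : Set S) : Set (ℕ → S) := {ρ | ∀ n, ∃ k, n ≤ k ∧ ρ k ∈ B}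

/-- The path event `FG B`: eventually stay in `B` forever. -/
def evFG (B : Set S) : Set (ℕ → S) := {ρ | ∃ n, ∀ k, n ≤ k → ρ k ∈ B}

/-- The until event `B' U B`. -/
def evU (B' B : Set S) : Set (ℕ → S) := {ρ | ∃ k, ρ k ∈ B ∧ ∀ j < k, ρ j ∈ B'}

/-- The bounded until event `B' U≤n B`. -/
def evUle (n : ℕ) (B' B : Set S) : Set (ℕ → S) := {ρ | ∃ k ≤ n, ρ k ∈ B ∧ ∀ j < k, ρ j ∈ B'}

/-- The avoid-set `B̃` of `B`: states from which `B` is reached with probability `0`. -/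
def avoid (P : Measure S → Measure (ℕ → S)) (B : Set S) : Set S :=
  {s | P (Measure.dirac s) (evF B) = 0}

/-- `T` is decisive w.r.t. `B` from `μ`. -/
def Decisive (P : Measure S → Measure (ℕ → S)) (μ : Measure S) (B : Set S) : Prop :=
  P μ (evF B ∪ evF (avoid P B)) = 1

/-- `T` is strongly decisive w.r.t. `B` from `μ`. -/
def StronglyDecisive (P : Measure S → Measure (ℕ → S)) (μ : Measure S) (B : Set S) : Prop :=
  P μ (evGF B ∪ evF (avoid P B)) = 1

/-- `T` is persistently decisive w.r.t. `B` from `μ`. -/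
def PersistentlyDecisive (P : Measure S → Measure (ℕ → S)) (μ : Measure S) (B : Set S) : Prop :=
  ∀ p : ℕ, P μ (evFge p B ∪ evFge p (avoid P B)) = 1

/-- `PreProb(B)`: measurable sets `B'` from which `B` is reached in one step with positive
probability, whatever the initial distribution concentrated on `B'`. -/
def PreProb (P : Measure S → Measure (ℕ → S)) (B : Set S) : Set (Set S) :=
  {B' | MeasurableSet B' ∧ ∀ μ' : Measure S, IsProbabilityMeasure μ' → μ' B' = 1 →
    0 < P μ' {ρ | ρ 0 ∈ B' ∧ ρ 1 ∈ B}}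

/-- `T` is fair w.r.t. `B` from `μ`. -/
def Fair (P : Measure S → Measure (ℕ → S)) (μ : Measure S) (B : Set S) : Prop :=
  ∀ B' ∈ PreProb P B, 0 < P μ (evGF B') →
    P μ (evGF B ∩ evGF B') = P μ (evGF B')

/-- The one-step measure transformer `Ω_T`. -/
noncomputable def Omega (κ : Kernel S S) (μ : Measure S) : Measure S :=
  μ.bind (fun s => κ s)

/-- Two measures are qualitatively equivalent if they have the same null (measurable) sets. -/
def QualEquiv {T : Type*} [MeasurableSpace T] (μ ν : Measure T) : Prop :=
  ∀ A : Set T, MeasurableSet A → (μ A = 0 ↔ ν A = 0)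

/-- `T₂ = (S₂,κ₂)` is an `α`-abstraction of `T₁ = (S₁,κ₁)`. -/
def IsAbstraction {S₁ S₂ : Type*} [MeasurableSpace S₁] [MeasurableSpace S₂]
    (κ₁ : Kernel S₁ S₁) (κ₂ : Kernel S₂ S₂) (α : S₁ → S₂) : Prop :=
  ∀ μ : Measure S₁, IsProbabilityMeasure μ →
    QualEquiv (Measure.map α (Omega κ₁ μ)) (Omega κ₂ (Measure.map α μ))

/-!
The avoid-set `B̃` is absorbing: if `s ∈ B̃` then `κ s`-almost every successor of `s` lies in
`B̃`, because `B` is reached from `s` with probability `0`, hence also from almost every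
successor. For an absorbing measurable set `C`, the cylinder "in `C` at time `k`, outside `C`
at a later time `m`" is null, so almost surely a path that enters `C` stays in `C` forever:
`F C ⊆ FG C` up to a null set, while `FG C ⊆ GF C ⊆ F C` holds pathwise.
-/

lemma evFG_subset_evGF {T : Type*} (C : Set T) : evFG C ⊆ evGF C := by
  rintro ρ ⟨n, hn⟩ m
  exact ⟨max n m, le_max_right n m, hn _ (le_max_left n m)⟩

lemma evGF_subset_evF {T : Type*} (C : Set T) : evGF C ⊆ evF C :=
  fun _ h => (h 0).imp fun _ hk => hk.2

lemma measurableSet_cylinder {A : ℕ → Set S} (hA : ∀ i, MeasurableSet (A i)) (n : ℕ) :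
    MeasurableSet {ρ : ℕ → S | ∀ i ≤ n, ρ i ∈ A i} := by
  simp only [Set.ofPred_forall]
  exact .iInter fun i => .iInter fun _ => measurable_pi_apply i (hA i)

section CylProb

variable (κ : Kernel S S)

lemma cylProb_succ (n : ℕ) (μ : Measure S) (A : ℕ → Set S) :
    cylProb κ (n + 1) μ A = ∫⁻ s in A 0, cylProb κ n (κ s) (fun i => A (i + 1)) ∂μ := rfl

lemma measurable_cylProb_kernel [IsSFiniteKernel κ] :
    ∀ (n : ℕ) (A : ℕ → Set S), (∀ i, MeasurableSet (A i)) →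
      Measurable fun s => cylProb κ n (κ s) A
  | 0, _, hA => κ.measurable_coe (hA 0)
  | n + 1, A, hA => by
    simp only [cylProb_succ]
    exact (measurable_cylProb_kernel n _ fun i => hA (i + 1)).setLIntegral_kernel (hA 0)

lemma cylProb_succ_dirac [IsSFiniteKernel κ] (n : ℕ) (s : S) {A : ℕ → Set S}
    (hA : ∀ i, MeasurableSet (A i)) :
    cylProb κ (n + 1) (Measure.dirac s) A
      = (A 0).indicator (fun t => cylProb κ n (κ t) fun i => A (i + 1)) s := by
  classical
  rw [cylProb_succ, Set.indicator_apply,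
    setLIntegral_dirac' (measurable_cylProb_kernel κ n _ fun i => hA (i + 1)) (hA 0)]

lemma measurable_cylProb_dirac [IsSFiniteKernel κ] (n : ℕ) {A : ℕ → Set S}
    (hA : ∀ i, MeasurableSet (A i)) : Measurable fun s => cylProb κ n (Measure.dirac s) A := by
  cases n with
  | zero => simpa only [cylProb, Kernel.id_apply] using Kernel.id.measurable_coe (hA 0)
  | succ n =>
    simp only [cylProb_succ_dirac κ n _ hA]
    exact (measurable_cylProb_kernel κ n _ fun i => hA (i + 1)).indicator (hA 0)

lemma cylProb_eq_lintegral_dirac [IsSFiniteKernel κ] (n : ℕ) (μ : Measure S) {A : ℕ → Set S}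
    (hA : ∀ i, MeasurableSet (A i)) :
    cylProb κ n μ A = ∫⁻ t, cylProb κ n (Measure.dirac t) A ∂μ := by
  cases n with
  | zero =>
    simp only [cylProb, Measure.dirac_apply' _ (hA 0)]
    rw [lintegral_indicator_one (hA 0)]
  | succ n =>
    simp only [cylProb_succ_dirac κ n _ hA]
    rw [lintegral_indicator (hA 0), cylProb_succ]

lemma cylProb_le_one [IsMarkovKernel κ] :
    ∀ (n : ℕ) (μ : Measure S) [IsProbabilityMeasure μ] (A : ℕ → Set S), cylProb κ n μ A ≤ 1
  | 0, _, _, _ => prob_le_one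
  | n + 1, μ, _, A =>
    calc ∫⁻ s in A 0, cylProb κ n (κ s) (fun i => A (i + 1)) ∂μ
        ≤ ∫⁻ _ in A 0, 1 ∂μ := lintegral_mono fun s => cylProb_le_one n (κ s) _
      _ = μ (A 0) := setLIntegral_one _
      _ ≤ 1 := prob_le_one

lemma ae_cylProb_dirac_eq_one [IsMarkovKernel κ] {n : ℕ} {ν : Measure S} [IsProbabilityMeasure ν]
    {A : ℕ → Set S} (hA : ∀ i, MeasurableSet (A i)) (h : cylProb κ n ν A = 1) :
    ∀ᵐ t ∂ν, cylProb κ n (Measure.dirac t) A = 1 := by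
  rw [cylProb_eq_lintegral_dirac κ n ν hA] at h
  refine ae_eq_of_ae_le_of_lintegral_le (ae_of_all _ fun t => cylProb_le_one κ n _ A)
    (by rw [h]; exact one_ne_top) aemeasurable_const ?_
  simp [h]

end CylProb

def IsAbsorbing (κ : Kernel S S) (C : Set S) : Prop := ∀ s ∈ C, κ s Cᶜ = 0

section Absorbing

variable {κ : Kernel S S} {C : Set S}

lemma cylProb_eq_zero_of_isAbsorbing_of_ae_mem (hC : IsAbsorbing κ C) :
    ∀ (n : ℕ) (ν : Measure S) (A : ℕ → Set S) (m : ℕ), m ≤ n → A m ⊆ Cᶜ → ν Cᶜ = 0 →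
      cylProb κ n ν A = 0
  | 0, _, _, m, hm, hAm, hν => by
    obtain rfl : m = 0 := by omega
    exact measure_mono_null hAm hν
  | n + 1, _, _, 0, _, hA0, hν => setLIntegral_measure_zero _ _ (measure_mono_null hA0 hν)
  | n + 1, ν, A, m + 1, hm, hAm, hν => by
    have hmem : ∀ᵐ s ∂ν, s ∈ C := ae_iff.2 hν
    rw [cylProb_succ]
    refine (lintegral_congr_ae (ae_restrict_of_ae (hmem.mono fun s hs => ?_))).trans lintegral_zero
    exact cylProb_eq_zero_of_isAbsorbing_of_ae_mem hC n (κ s) _ m (by omega) hAm (hC s hs)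

lemma cylProb_eq_zero_of_isAbsorbing (hC : IsAbsorbing κ C) :
    ∀ (k n : ℕ) (ν : Measure S) (A : ℕ → Set S) (m : ℕ), k < m → m ≤ n →
      MeasurableSet (A k) → A k ⊆ C → A m ⊆ Cᶜ → cylProb κ n ν A = 0
  | _, 0, _, _, _, hkm, hmn, _, _, _ => by omega
  | 0, n + 1, ν, A, m + 1, _, hmn, hA0, hA0C, hAm => by
    rw [cylProb_succ]
    refine (setLIntegral_congr_fun hA0 fun s hs => ?_).trans lintegral_zero
    exact cylProb_eq_zero_of_isAbsorbing_of_ae_mem hC n (κ s) _ m (by omega) hAm (hC s (hA0C hs))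
  | k + 1, n + 1, ν, A, m + 1, hkm, hmn, hAk, hAkC, hAm => by
    rw [cylProb_succ]
    refine (lintegral_congr fun s => ?_).trans lintegral_zero
    exact cylProb_eq_zero_of_isAbsorbing hC k n (κ s) _ m (by omega) (by omega) hAk hAkC hAm
  | _ + 1, _ + 1, _, _, 0, hkm, _, _, _, _ => by omega

variable {P : Measure S → Measure (ℕ → S)}

lemma ae_mem_of_mem_of_isAbsorbing (hP : IsPathMeasure κ P) (μ : Measure S)
    [IsProbabilityMeasure μ] (hCm : MeasurableSet C) (hC : IsAbsorbing κ C) {k m : ℕ}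
    (hkm : k ≤ m) : ∀ᵐ ρ ∂P μ, ρ k ∈ C → ρ m ∈ C := by
  rcases hkm.eq_or_lt with rfl | hlt
  · exact ae_of_all _ fun _ => id
  classical
  set A : ℕ → Set S := fun i => if i = k then C else if i = m then Cᶜ else Set.univ with hAdef
  have hA : ∀ i, MeasurableSet (A i) := fun i => by
    simp only [hAdef]
    split_ifs
    exacts [hCm, hCm.compl, .univ]
  have hAk : A k = C := if_pos rfl
  have hAm : A m = Cᶜ := by simp [hAdef, hlt.ne']
  refine ae_iff.2 (measure_mono_null (t := {ρ | ∀ i ≤ m, ρ i ∈ A i}) (fun ρ hρ i _ => ?_) ?_)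
  · obtain ⟨hk, hm⟩ := Classical.not_imp.1 hρ
    simp only [hAdef]
    split_ifs with h1 h2
    exacts [h1 ▸ hk, h2 ▸ hm, trivial]
  · rw [(hP μ ‹_›).2 m A hA]
    exact cylProb_eq_zero_of_isAbsorbing hC k m μ A m hlt le_rfl (hA k) hAk.le hAm.le

lemma measure_evF_le_evFG_of_isAbsorbing (hP : IsPathMeasure κ P) (μ : Measure S)
    [IsProbabilityMeasure μ] (hCm : MeasurableSet C) (hC : IsAbsorbing κ C) :
    P μ (evF C) ≤ P μ (evFG C) := by
  refine measure_mono_ae ?_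
  filter_upwards [ae_all_iff.2 fun k => ae_all_iff.2 fun d =>
    ae_mem_of_mem_of_isAbsorbing hP μ hCm hC (Nat.le_add_right k d)] with ρ hρ
  rintro ⟨k, hk⟩
  refine ⟨k, fun j hj => ?_⟩
  obtain ⟨d, rfl⟩ := Nat.exists_eq_add_of_le hj
  exact hρ k d hk

end Absorbing

section Avoid

variable {κ : Kernel S S} {P : Measure S → Measure (ℕ → S)} {B : Set S}

lemma avoid_eq_iInter (hP : IsPathMeasure κ P) (hB : MeasurableSet B) :
    avoid P B = ⋂ n, {s | cylProb κ n (Measure.dirac s) (fun _ => Bᶜ) = 1} := by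
  have hF : evF B = ⋃ n, {ρ : ℕ → S | ∀ i ≤ n, ρ i ∈ Bᶜ}ᶜ := by
    ext ρ
    simp only [evF, Set.mem_ofPred_eq, Set.mem_iUnion, Set.mem_compl_iff, not_forall, not_not]
    exact ⟨fun ⟨k, hk⟩ => ⟨k, k, le_rfl, hk⟩, fun ⟨_, k, _, hk⟩ => ⟨k, hk⟩⟩
  ext s
  obtain ⟨_, hcyl⟩ := hP (Measure.dirac s) inferInstance
  simp only [avoid, Set.mem_ofPred_eq, Set.mem_iInter, hF, measure_iUnion_null_iff]
  refine forall_congr' fun n => ?_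
  rw [← prob_compl_eq_one_iff (measurableSet_cylinder (fun _ => hB.compl) n).compl, compl_compl,
    hcyl n _ fun _ => hB.compl]

lemma measurableSet_avoid [IsSFiniteKernel κ] (hP : IsPathMeasure κ P) (hB : MeasurableSet B) :
    MeasurableSet (avoid P B) := by
  rw [avoid_eq_iInter hP hB]
  exact .iInter fun n =>
    measurable_cylProb_dirac κ n (fun _ => hB.compl) (measurableSet_singleton 1)

lemma isAbsorbing_avoid [IsMarkovKernel κ] (hP : IsPathMeasure κ P) (hB : MeasurableSet B) :
    IsAbsorbing κ (avoid P B) := by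
  intro s hs
  rw [avoid_eq_iInter hP hB] at hs ⊢
  simp only [Set.mem_iInter, Set.mem_ofPred_eq] at hs
  have hstep : ∀ n, cylProb κ (n + 1) (Measure.dirac s) (fun _ => Bᶜ) = 1 := fun n => hs (n + 1)
  simp only [cylProb_succ_dirac κ _ s fun _ => hB.compl] at hstep
  have hsB : s ∈ Bᶜ := Set.mem_of_indicator_ne_zero ((hstep 0).symm ▸ one_ne_zero)
  simp only [Set.indicator_of_mem hsB] at hstep
  rw [measure_eq_zero_iff_ae_notMem]
  filter_upwards [ae_all_iff.2 fun n => ae_cylProb_dirac_eq_one κ (fun _ => hB.compl) (hstep n)]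
    with t ht
  simpa using ht

end Avoid

/-- for every probability measure `μ`,
`Prob_μ(F B̃) = Prob_μ(FG B̃) = Prob_μ(GF B̃)`. -/
theorem statement_1 {S : Type*} [MeasurableSpace S]
    (κ : Kernel S S) [IsMarkovKernel κ]
    (P : Measure S → Measure (ℕ → S)) (hP : IsPathMeasure κ P)
    (B : Set S) (hB : MeasurableSet B) :
    ∀ μ : Measure S, IsProbabilityMeasure μ →
      P μ (evF (avoid P B)) = P μ (evFG (avoid P B)) ∧
      P μ (evFG (avoid P B)) = P μ (evGF (avoid P B)) := by
  intro μ hμ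
  have hCm := measurableSet_avoid hP hB
  have hFG := measure_evF_le_evFG_of_isAbsorbing hP μ hCm (isAbsorbing_avoid hP hB)
  have hGF := measure_mono (μ := P μ) (evFG_subset_evGF (avoid P B))
  have hF := measure_mono (μ := P μ) (evGF_subset_evF (avoid P B))
  exact ⟨le_antisymm hFG (hGF.trans hF), le_antisymm hGF (hF.trans hFG)⟩

end STS
end

section
/- Let T = (S,Σ,κ) be an STS and B ∈ Σ. Then the following three properties are equivalent: (i) T is decisive w.r.t. B from every initial probability measure (D(B)); (ii) T is strongly decisive w.r.t. B from every initial probability measure (SD(B)); (iii) T is persistently decisive w.r.t. B from every initial probability measure (PD(B)). -/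
/-!
Since `GF B ⊆ F B`, strong decisiveness implies decisiveness. By the Markov property the
`p`-shifted path under `Prob_μ` has law `Prob_{Ω^p μ}`, and the shift pulls `F B` back to
`F≥p B`; so `PD(μ, B)` says exactly that `D(Ω^p μ, B)` holds for every `p`, and `D(B)` gives
`PD(B)`. Finally a path lying in every `F≥p B ∪ F≥p B̃` visits `B` infinitely often or reaches
`B̃`, and a countable intersection of events of probability one (measurable because `B̃` is)
has probability one, so `PD(μ, B)` implies `SD(μ, B)`.
-/

open MeasureTheory ProbabilityTheory ENNReal Filter Topology

namespace STS

variable {S : Type*} [MeasurableSpace S]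

theorem _root_.MeasureTheory.Measure.ext_of_pi_Iic {ν₁ ν₂ : Measure (ℕ → S)} [IsFiniteMeasure ν₁]
    (h : ∀ (n : ℕ) (A : ℕ → Set S), (∀ i, MeasurableSet (A i)) →
      ν₁ (Set.pi (Set.Iic n) A) = ν₂ (Set.pi (Set.Iic n) A)) :
    ν₁ = ν₂ := by
  classical
  refine ext_of_generate_finite _ generateFrom_squareCylinders.symm
    (isPiSystem_squareCylinders (fun _ => MeasurableSpace.isPiSystem_measurableSet)
      fun _ => .univ) ?_ ?_
  · rintro _ ⟨s, A, hA, rfl⟩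
    replace hA : ∀ i, MeasurableSet (A i) := Set.mem_univ_pi.mp hA
    have hs : (s : Set ℕ).pi A = (Set.Iic (s.sup id)).pi (s.piecewise A fun _ => Set.univ) := by
      ext ρ
      simp only [Set.mem_pi, Finset.mem_coe, Set.mem_Iic]
      refine ⟨fun hρ i _ => ?_, fun hρ i hi => ?_⟩
      · by_cases hi : i ∈ s <;> simp [hi, hρ]
      · simpa [hi] using hρ i (Finset.le_sup (f := id) hi)
    rw [hs]
    exact h _ _ fun i => by by_cases hi : i ∈ s <;> simp [hi, hA i]
  · simpa only [Set.pi_univ] using h 0 (fun _ => Set.univ) fun _ => MeasurableSet.univ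

section Kernel

variable (κ : Kernel S S)

theorem measurable_cylProb [IsSFiniteKernel κ] (η : Kernel S S) [IsSFiniteKernel η] (n : ℕ)
    {A : ℕ → Set S} (hA : ∀ i, MeasurableSet (A i)) :
    Measurable fun s => cylProb κ n (η s) A := by
  induction n generalizing η A with
  | zero => exact η.measurable_coe (hA 0)
  | succ n ih => exact (ih κ fun i => hA (i + 1)).setLIntegral_kernel (hA 0)

theorem cylProb_omega [IsSFiniteKernel κ] (n : ℕ) (μ : Measure S) {A : ℕ → Set S}
    (hA : ∀ i, MeasurableSet (A i)) :
    cylProb κ n (Omega κ μ) A = ∫⁻ s, cylProb κ n (κ s) A ∂μ := by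
  cases n with
  | zero => exact Measure.bind_apply (hA 0) κ.aemeasurable
  | succ n =>
    have hg := measurable_cylProb κ κ n fun i => hA (i + 1)
    simp only [cylProb, Omega]
    rw [← lintegral_indicator (hA 0),
      Measure.lintegral_bind κ.aemeasurable (hg.indicator (hA 0)).aemeasurable]
    simp only [lintegral_indicator (hA 0)]

instance [IsMarkovKernel κ] (μ : Measure S) [IsProbabilityMeasure μ] :
    IsProbabilityMeasure (Omega κ μ) :=
  inferInstanceAs (IsProbabilityMeasure (κ ∘ₘ μ))

instance [IsMarkovKernel κ] (p : ℕ) (μ : Measure S) [IsProbabilityMeasure μ] :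
    IsProbabilityMeasure ((Omega κ)^[p] μ) := by
  induction p with
  | zero => assumption
  | succ p ih => rw [Function.iterate_succ_apply']; infer_instance

end Kernel

section Sequences

variable {α : Type*}

def shift (p : ℕ) (ρ : ℕ → α) : ℕ → α := fun i => ρ (i + p)

theorem shift_succ (p : ℕ) : shift (α := α) (p + 1) = shift p ∘ shift 1 := rfl

theorem preimage_shift_evF (p : ℕ) (B : Set α) : shift p ⁻¹' evF B = evFge p B := by
  ext ρ
  constructor
  · rintro ⟨k, hk⟩
    exact ⟨k + p, Nat.le_add_left p k, hk⟩
  · rintro ⟨k, hpk, hk⟩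
    exact ⟨k - p, by rwa [shift, Nat.sub_add_cancel hpk]⟩

theorem preimage_shift_one_pi_Iic (n : ℕ) (A : ℕ → Set α) :
    shift 1 ⁻¹' Set.pi (Set.Iic n) A =
      Set.pi (Set.Iic (n + 1)) (fun | 0 => Set.univ | i + 1 => A i) := by
  ext ρ
  simp only [Set.mem_preimage, Set.mem_pi, Set.mem_Iic, shift]
  constructor
  · rintro hρ (_ | i) hi
    exacts [trivial, hρ i (by omega)]
  · exact fun hρ i hi => hρ (i + 1) (by omega)

theorem pi_Iic_update_univ (k : ℕ) (B : Set α) :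
    Set.pi (Set.Iic k) (Function.update (fun _ => (Set.univ : Set α)) k B) =
      {ρ : ℕ → α | ρ k ∈ B} := by
  ext ρ
  simp only [Set.mem_pi, Set.mem_Iic, Set.mem_ofPred_eq]
  refine ⟨fun hρ => by simpa using hρ k le_rfl, fun hρ i _ => ?_⟩
  by_cases hik : i = k
  · subst hik; simpa using hρ
  · simp [hik]

theorem evGF_subset_evF_s5 (B : Set α) : evGF B ⊆ evF B := fun _ hρ =>
  let ⟨k, _, hk⟩ := hρ 0
  ⟨k, hk⟩

theorem iInter_evFge_union_subset (B C : Set α) :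
    ⋂ p, (evFge p B ∪ evFge p C) ⊆ evGF B ∪ evF C := by
  intro ρ hρ
  by_cases hGF : ρ ∈ evGF B
  · exact .inl hGF
  · obtain ⟨n, hn⟩ : ∃ n, ∀ k, n ≤ k → ρ k ∉ B := by simpa [evGF] using hGF
    rcases Set.mem_iInter.mp hρ n with ⟨k, hnk, hk⟩ | ⟨k, -, hk⟩
    exacts [absurd hk (hn k hnk), .inr ⟨k, hk⟩]

end Sequences

theorem measurable_shift (p : ℕ) : Measurable (shift (α := S) p) :=
  measurable_pi_lambda _ fun i => measurable_pi_apply (i + p)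

theorem measurableSet_evF {B : Set S} (hB : MeasurableSet B) : MeasurableSet (evF B) := by
  rw [evF, Set.ofPred_exists]
  exact .iUnion fun k => measurable_pi_apply k hB

theorem measurableSet_evFge (p : ℕ) {B : Set S} (hB : MeasurableSet B) :
    MeasurableSet (evFge p B) :=
  preimage_shift_evF p B ▸ measurable_shift p (measurableSet_evF hB)

namespace IsPathMeasure

variable {κ : Kernel S S} {P : Measure S → Measure (ℕ → S)}

theorem isProbabilityMeasure (hP : IsPathMeasure κ P) (μ : Measure S) [IsProbabilityMeasure μ] :
    IsProbabilityMeasure (P μ) :=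
  (hP μ ‹_›).1

theorem apply_pi_Iic (hP : IsPathMeasure κ P) (μ : Measure S) [IsProbabilityMeasure μ] (n : ℕ)
    {A : ℕ → Set S} (hA : ∀ i, MeasurableSet (A i)) :
    P μ (Set.pi (Set.Iic n) A) = cylProb κ n μ A :=
  (hP μ ‹_›).2 n A hA

theorem map_shift_one [IsMarkovKernel κ] (hP : IsPathMeasure κ P) (μ : Measure S)
    [IsProbabilityMeasure μ] : (P μ).map (shift 1) = P (Omega κ μ) := by
  have := hP.isProbabilityMeasure μ
  refine Measure.ext_of_pi_Iic fun n A hA => ?_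
  have hA' : ∀ i, MeasurableSet ((fun | 0 => Set.univ | i + 1 => A i : ℕ → Set S) i) := by
    rintro (_ | i)
    exacts [.univ, hA i]
  rw [Measure.map_apply (measurable_shift 1) (.pi (Set.to_countable _) fun i _ => hA i),
    preimage_shift_one_pi_Iic, hP.apply_pi_Iic μ _ hA', hP.apply_pi_Iic _ _ hA,
    cylProb_omega κ n μ hA, cylProb, Measure.restrict_univ]

theorem map_shift [IsMarkovKernel κ] (hP : IsPathMeasure κ P) (p : ℕ) (μ : Measure S)
    [IsProbabilityMeasure μ] : (P μ).map (shift p) = P ((Omega κ)^[p] μ) := by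
  induction p generalizing μ with
  | zero => exact Measure.map_id
  | succ p ih =>
    have := hP.isProbabilityMeasure μ
    rw [shift_succ, ← Measure.map_map (measurable_shift p) (measurable_shift 1),
      hP.map_shift_one, ih, Function.iterate_succ_apply]

theorem apply_preimage_shift [IsMarkovKernel κ] (hP : IsPathMeasure κ P) (p : ℕ)
    (μ : Measure S) [IsProbabilityMeasure μ] {E : Set (ℕ → S)} (hE : MeasurableSet E) :
    P μ (shift p ⁻¹' E) = P ((Omega κ)^[p] μ) E := by
  rw [← Measure.map_apply (measurable_shift p) hE, hP.map_shift]

theorem measurableSet_avoid [IsMarkovKernel κ] (hP : IsPathMeasure κ P) {B : Set S}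
    (hB : MeasurableSet B) : MeasurableSet (avoid P B) := by
  set A : ℕ → ℕ → Set S := fun k => Function.update (fun _ => Set.univ) k B
  have hA : ∀ k i, MeasurableSet (A k i) := fun k i => by
    by_cases hik : i = k
    · subst hik; simpa [A] using hB
    · simp [A, hik]
  -- `s ↦ P δ_s {ρ | ρ k ∈ B}` is a cylinder probability for the identity kernel.
  have havoid : avoid P B = ⋂ k, {s | cylProb κ k (Kernel.id s) (A k) = 0} := by
    ext s
    simp only [avoid, evF, Set.ofPred_exists, Set.mem_ofPred_eq, Set.mem_iInter, Kernel.id_apply,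
      measure_iUnion_null_iff, ← hP.apply_pi_Iic _ _ (hA _), A, pi_Iic_update_univ]
  rw [havoid]
  exact .iInter fun k => measurable_cylProb κ Kernel.id k (hA k) (measurableSet_singleton 0)

end IsPathMeasure

section Decisiveness

variable {κ : Kernel S S} {P : Measure S → Measure (ℕ → S)} {μ : Measure S} {B : Set S}

theorem StronglyDecisive.decisive [IsProbabilityMeasure (P μ)] (h : StronglyDecisive P μ B) :
    Decisive P μ B :=
  one_le_prob_iff.mp
    (h.ge.trans (measure_mono (Set.union_subset_union_left _ (evGF_subset_evF_s5 B))))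

variable [IsMarkovKernel κ] [IsProbabilityMeasure μ]

theorem persistentlyDecisive_iff_decisive_omega_iterate (hP : IsPathMeasure κ P)
    (hB : MeasurableSet B) :
    PersistentlyDecisive P μ B ↔ ∀ p, Decisive P ((Omega κ)^[p] μ) B := by
  refine forall_congr' fun p => ?_
  rw [Decisive, ← hP.apply_preimage_shift p μ
      ((measurableSet_evF hB).union (measurableSet_evF (hP.measurableSet_avoid hB))),
    Set.preimage_union, preimage_shift_evF, preimage_shift_evF]

theorem PersistentlyDecisive.stronglyDecisive (hP : IsPathMeasure κ P) (hB : MeasurableSet B)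
    (h : PersistentlyDecisive P μ B) : StronglyDecisive P μ B := by
  have := hP.isProbabilityMeasure μ
  have hE : ∀ p, MeasurableSet (evFge p B ∪ evFge p (avoid P B)) := fun p =>
    (measurableSet_evFge p hB).union (measurableSet_evFge p (hP.measurableSet_avoid hB))
  have hall : P μ (⋂ p, (evFge p B ∪ evFge p (avoid P B))) = 1 :=
    (mem_ae_iff_prob_eq_one (.iInter hE)).mp
      (countable_iInter_mem.mpr fun p => (mem_ae_iff_prob_eq_one (hE p)).mpr (h p))
  exact one_le_prob_iff.mp (hall.ge.trans (measure_mono (iInter_evFge_union_subset _ _)))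

end Decisiveness

/-- `D(B)`, `SD(B)` and `PD(B)` (decisiveness from every initial probability
measure) are all equivalent. -/
theorem statement_5 {S : Type*} [MeasurableSpace S]
    (κ : Kernel S S) [IsMarkovKernel κ]
    (P : Measure S → Measure (ℕ → S)) (hP : IsPathMeasure κ P)
    (B : Set S) (hB : MeasurableSet B) :
    ((∀ μ : Measure S, IsProbabilityMeasure μ → Decisive P μ B) ↔
      (∀ μ : Measure S, IsProbabilityMeasure μ → StronglyDecisive P μ B)) ∧
    ((∀ μ : Measure S, IsProbabilityMeasure μ → StronglyDecisive P μ B) ↔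
      (∀ μ : Measure S, IsProbabilityMeasure μ → PersistentlyDecisive P μ B)) := by
  have hD_PD (h : ∀ μ : Measure S, IsProbabilityMeasure μ → Decisive P μ B) (μ : Measure S)
      (_ : IsProbabilityMeasure μ) : PersistentlyDecisive P μ B :=
    (persistentlyDecisive_iff_decisive_omega_iterate hP hB).mpr fun p => h _ inferInstance
  have hPD_SD (h : ∀ μ : Measure S, IsProbabilityMeasure μ → PersistentlyDecisive P μ B)
      (μ : Measure S) (_ : IsProbabilityMeasure μ) : StronglyDecisive P μ B :=
    (h μ ‹_›).stronglyDecisive hP hB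
  have hSD_D (h : ∀ μ : Measure S, IsProbabilityMeasure μ → StronglyDecisive P μ B)
      (μ : Measure S) (_ : IsProbabilityMeasure μ) : Decisive P μ B :=
    have := hP.isProbabilityMeasure μ
    (h μ ‹_›).decisive
  exact ⟨⟨fun h => hPD_SD (hD_PD h), hSD_D⟩, ⟨fun h => hD_PD (hSD_D h), hPD_SD⟩⟩

end STS
end
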